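/- arXiv:1810.12969 — 2 statements merged into one kernel-verified Lean document; each statement's English description precedes it below -/
import Mathlib

section
/- Fix ε ∈ {+1,−1} and λ, u ∈ ℂ. Assume θ_{01}((λ+4εlη)/2, τ/2) ≠ 0, θ_{01}(λ/2, τ/2) ≠ 0, and that θ_{11}(η,τ), θ_{10}(η,τ), θ_{00}(η,τ), θ_{01}(η,τ) are all nonzero; set p := −θ_{00}(λ/2, τ/2)/θ_{01}(λ/2, τ/2). Then the difference operator δ := p·(W_1(u)·ρ^l(S^1) + i·W_2(u)·ρ^l(S^2)) + W_0(u)·ρ^l(S^0) − W_3(u)·ρ^l(S^3) satisfies (δ f_ε(λ,u,·))(z) = (θ_{01}((λ+4εlη)/2,τ/2)/θ_{01}(λ/2,τ/2)) · 2θ_{11}(u+2lη,τ) · f_ε(λ,u−2η,z) for every z ∈ ℂ with θ_{11}(2z,τ) ≠ 0. -/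
noncomputable section

open Complex

/-- Theta function with characteristics `θ_{ab}(z,τ)`. -/
def theta (a b : ℝ) (z τ : ℂ) : ℂ :=
  ∑' n : ℤ, Complex.exp ((Real.pi : ℂ) * Complex.I * ((a : ℂ)/2 + (n : ℂ))^2 * τ +
    2 * (Real.pi : ℂ) * Complex.I * ((a : ℂ)/2 + (n : ℂ)) * ((b : ℂ)/2 + z))

/-- `[z;a]_k := ∏_{j=0}^{k-1} θ₁₁(z+a+2jη,τ) θ₁₁(-z+a+2jη,τ)`. -/
def brK (η τ z a : ℂ) (k : ℕ) : ℂ :=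
  ∏ j ∈ Finset.range k,
    theta 1 1 (z + a + 2*(j:ℂ)*η) τ * theta 1 1 (-z + a + 2*(j:ℂ)*η) τ

/-- `f_ε(λ,u,z) := [z;(ελ+u)/2+(-l+1)η]_{2l}`, with `tl = 2l`. -/
def fEps (η τ l : ℂ) (tl : ℕ) (ε lam u z : ℂ) : ℂ :=
  brK η τ z ((ε*lam + u)/2 + (-l+1)*η) tl

/-- `ω_λ(u;v)(z) := [z;(λ+u-v)/2+(-l+1)η]_{2l}`. -/
def omegaFn (η τ l : ℂ) (tl : ℕ) (lam u v z : ℂ) : ℂ :=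
  brK η τ z ((lam + u - v)/2 + (-l+1)*η) tl

def s0f (η τ z : ℂ) : ℂ := theta 1 1 η τ * theta 1 1 (2*z) τ
def s1f (η τ z : ℂ) : ℂ := theta 1 0 η τ * theta 1 0 (2*z) τ
def s2f (η τ z : ℂ) : ℂ := Complex.I * theta 0 0 η τ * theta 0 0 (2*z) τ
def s3f (η τ z : ℂ) : ℂ := theta 0 1 η τ * theta 0 1 (2*z) τ

/-- The difference operator `ρ^l(S^a)` associated to the coefficient function `s`. -/
def rhoS (η τ l : ℂ) (s : ℂ → ℂ) : (ℂ → ℂ) →ₗ[ℂ] (ℂ → ℂ) where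
  toFun f := fun z =>
    (s (z - l*η) * f (z + η) - s (-z - l*η) * f (z - η)) / theta 1 1 (2*z) τ
  map_add' f g := by
    funext z
    simp only [Pi.add_apply]
    ring
  map_smul' c f := by
    funext z
    simp only [Pi.smul_apply, smul_eq_mul, RingHom.id_apply]
    ring

def W0 (η τ u : ℂ) : ℂ := theta 1 1 u τ / theta 1 1 η τ
def W1 (η τ u : ℂ) : ℂ := theta 1 0 u τ / theta 1 0 η τ
def W2 (η τ u : ℂ) : ℂ := theta 0 0 u τ / theta 0 0 η τ
def W3 (η τ u : ℂ) : ℂ := theta 0 1 u τ / theta 0 1 η τ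

/-- `θ^{(2l)}_{00}(u) := ∏_{j=0}^{2l-1} θ₀₀(u+(2j-2l+1)η,τ)`, with `tl = 2l`. -/
def theta2l (η τ : ℂ) (tl : ℕ) (u : ℂ) : ℂ :=
  ∏ j ∈ Finset.range tl, theta 0 0 (u + (2*(j:ℂ) - (tl:ℂ) + 1)*η) τ

/-- The gauge transformation matrix `M_λ(v)`. -/
def Mlam (τ lam v : ℂ) : Matrix (Fin 2) (Fin 2) ℂ :=
  !![-theta 0 0 ((lam - v)/2) (τ/2), -theta 0 0 ((lam + v)/2) (τ/2);
     theta 0 1 ((lam - v)/2) (τ/2), theta 0 1 ((lam + v)/2) (τ/2)]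

/-- The `L`-operator as a 2×2 matrix of difference operators. -/
def LopM (η τ l u : ℂ) : Matrix (Fin 2) (Fin 2) (Module.End ℂ (ℂ → ℂ)) :=
  !![W0 η τ u • rhoS η τ l (s0f η τ) + W3 η τ u • rhoS η τ l (s3f η τ),
     W1 η τ u • rhoS η τ l (s1f η τ) - (Complex.I * W2 η τ u) • rhoS η τ l (s2f η τ);
     W1 η τ u • rhoS η τ l (s1f η τ) + (Complex.I * W2 η τ u) • rhoS η τ l (s2f η τ),
     W0 η τ u • rhoS η τ l (s0f η τ) - W3 η τ u • rhoS η τ l (s3f η τ)]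

/-- `N := adj(M_{λ₀+4(j+ε)lη}(v)) · L(u) · M_{λ₀+4jlη}(v)`. -/
def NMat (η τ l lam0 v u : ℂ) (j : ℤ) (ε : ℂ) :
    Matrix (Fin 2) (Fin 2) (Module.End ℂ (ℂ → ℂ)) :=
  ((Mlam τ (lam0 + 4*((j:ℂ)+ε)*l*η) v).adjugate).map
      (algebraMap ℂ (Module.End ℂ (ℂ → ℂ))) *
    LopM η τ l u *
    (Mlam τ (lam0 + 4*(j:ℂ)*l*η) v).map (algebraMap ℂ (Module.End ℂ (ℂ → ℂ)))

/-- The kernel `μ(z,w)` of the Sklyanin form. -/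
def muK (η τ : ℂ) (tl : ℕ) (z w : ℂ) : ℂ :=
  theta 1 1 (2*z) τ * theta 1 1 (2*w) τ /
    ∏ j ∈ Finset.range (tl + 2),
      (theta 0 0 (z + w + (2*(j:ℂ) - (tl:ℂ) - 1)*η) τ *
       theta 0 0 (z - w + (2*(j:ℂ) - (tl:ℂ) - 1)*η) τ)

/-- Integrand of the Sklyanin form. -/
def sklIntegrand (η τ : ℂ) (tl : ℕ) (f g : ℂ → ℂ) (x y : ℝ) : ℂ :=
  (starRingEnd ℂ) (f ((x:ℂ) + (y:ℂ)*Complex.I)) * g ((x:ℂ) + (y:ℂ)*Complex.I) *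
    muK η τ tl ((x:ℂ) + (y:ℂ)*Complex.I) ((x:ℂ) - (y:ℂ)*Complex.I)

/-- The Sklyanin form `⟨f,g⟩` (with `τ = i t₀`). -/
def sklForm (η τ : ℂ) (tl : ℕ) (t0 : ℝ) (f g : ℂ → ℂ) : ℂ :=
  ∫ x in (0:ℝ)..1, ∫ y in (0:ℝ)..t0, sklIntegrand η τ tl f g x y

/-- The constant `C_{2l}`. -/
def C2l (η τ : ℂ) (tl : ℕ) : ℂ :=
  (-2*η * Complex.exp (3*(Real.pi:ℂ)*Complex.I*τ/4)) /
    (theta 1 1 (2*((tl:ℂ)+1)*η) τ *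
      ∏' j : ℕ, (1 - Complex.exp (2*(Real.pi:ℂ)*Complex.I*((j:ℂ)+1)*τ))^3)

/-!
All theta identities used come from one doubling formula: splitting the summation lattice `ℤ²`
of `θ₀ᵦ((x+y)/2, τ/2) θ₀ᵦ'((x-y)/2, τ/2)` according to the parity of `m + n` gives
`θ₀,ᵦ₊ᵦ'(x) θ₀,ᵦ₋ᵦ'(y) + θ₁,ᵦ₊ᵦ'(x) θ₁,ᵦ₋ᵦ'(y)` at `τ`.

All four `ρ^l(S^a)` shift by the same amounts, so `δ` is a single difference operator, and by the
doubling formula its coefficient factors as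
`2 θ₀₁(u/2 - w, τ/2) θ₁₁(w + (u+λ)/2) θ₁₁(w + (u-λ)/2) / θ₀₁(λ/2, τ/2)`.
The products `f_ε(λ,u,z ± η)` and `f_ε(λ,u-2η,z)` telescope into one another up to a single end
factor, which the factor `θ₁₁(w + (u+ελ)/2)` cancels; what remains is a three-term identity that
is again the doubling formula.
-/

def thetaTerm (a b : ℝ) (z τ : ℂ) (n : ℤ) : ℂ :=
  Complex.exp ((Real.pi : ℂ) * Complex.I * ((a : ℂ)/2 + (n : ℂ))^2 * τ +
    2 * (Real.pi : ℂ) * Complex.I * ((a : ℂ)/2 + (n : ℂ)) * ((b : ℂ)/2 + z))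

lemma theta_eq_tsum_thetaTerm (a b : ℝ) (z τ : ℂ) :
    theta a b z τ = ∑' n : ℤ, thetaTerm a b z τ n := rfl

lemma thetaTerm_eq_mul_jacobiTheta₂_term (a b : ℝ) (z τ : ℂ) (n : ℤ) :
    thetaTerm a b z τ n = Complex.exp ((Real.pi : ℂ) * Complex.I * ((a:ℂ)/2)^2 * τ +
        2 * (Real.pi : ℂ) * Complex.I * ((a:ℂ)/2) * ((b:ℂ)/2 + z)) *
      jacobiTheta₂_term n ((b:ℂ)/2 + z + (a:ℂ)/2 * τ) τ := by
  rw [thetaTerm, jacobiTheta₂_term, ← Complex.exp_add]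
  congr 1
  ring

lemma summable_norm_thetaTerm {τ : ℂ} (hτ : 0 < τ.im) (a b : ℝ) (z : ℂ) :
    Summable fun n : ℤ => ‖thetaTerm a b z τ n‖ := by
  simp_rw [thetaTerm_eq_mul_jacobiTheta₂_term, norm_mul]
  refine Summable.mul_left _ ?_
  set w := (b:ℂ)/2 + z + (a:ℂ)/2 * τ
  refine Summable.of_nonneg_of_le (fun _ => norm_nonneg _)
    (fun n => norm_jacobiTheta₂_term_le hτ (le_refl |w.im|) (le_refl τ.im) n) ?_
  simpa using summable_pow_mul_jacobiTheta₂_term_bound |w.im| hτ 0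

lemma theta_mul_theta {τ : ℂ} (hτ : 0 < τ.im) (a b a' b' : ℝ) (x y : ℂ) :
    theta a b x τ * theta a' b' y τ
      = ∑' p : ℤ × ℤ, thetaTerm a b x τ p.1 * thetaTerm a' b' y τ p.2 :=
  tsum_mul_tsum_of_summable_norm (summable_norm_thetaTerm hτ a b x)
    (summable_norm_thetaTerm hτ a' b' y)

lemma theta_char_add_two (a b : ℝ) (z τ : ℂ) :
    theta a (b + 2) z τ = Complex.exp ((Real.pi : ℂ) * Complex.I * a) * theta a b z τ := by
  simp only [theta_eq_tsum_thetaTerm, ← tsum_mul_left, thetaTerm, ← Complex.exp_add]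
  refine tsum_congr fun n => Complex.exp_eq_exp_iff_exists_int.mpr ⟨n, ?_⟩
  push_cast
  ring

lemma theta_zero_two (z τ : ℂ) : theta 0 2 z τ = theta 0 0 z τ := by
  simpa using theta_char_add_two 0 0 z τ

lemma theta_one_two (z τ : ℂ) : theta 1 2 z τ = -theta 1 0 z τ := by
  simpa using theta_char_add_two 1 0 z τ

lemma theta_zero_neg_one (z τ : ℂ) : theta 0 (-1) z τ = theta 0 1 z τ := by
  have h := theta_char_add_two 0 (-1) z τ
  norm_num at h
  exact h.symm

lemma theta_one_neg_one (z τ : ℂ) : theta 1 (-1) z τ = -theta 1 1 z τ := by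
  have h := theta_char_add_two 1 (-1) z τ
  norm_num at h
  rw [h, neg_neg]

lemma theta_zero_neg (b : ℝ) (z τ : ℂ) : theta 0 b (-z) τ = theta 0 (-b) z τ := by
  rw [theta_eq_tsum_thetaTerm, theta_eq_tsum_thetaTerm,
    ← (Equiv.neg ℤ).tsum_eq (thetaTerm 0 (-b) z τ)]
  refine tsum_congr fun n => ?_
  simp only [thetaTerm, Equiv.neg_apply]
  congr 1
  push_cast
  ring

lemma theta_zero_one_neg (z τ : ℂ) : theta 0 1 (-z) τ = theta 0 1 z τ := by
  rw [theta_zero_neg, theta_zero_neg_one]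

def diagEven (q : ℤ × ℤ) : ℤ × ℤ := (q.1 + q.2, q.1 - q.2)

def diagOdd (q : ℤ × ℤ) : ℤ × ℤ := (q.1 + q.2 + 1, q.1 - q.2)

lemma diagEven_injective : Function.Injective diagEven := by
  rintro ⟨a, b⟩ ⟨c, d⟩ h
  simp only [diagEven, Prod.mk.injEq] at h
  exact Prod.ext (by omega) (by omega)

lemma diagOdd_injective : Function.Injective diagOdd := by
  rintro ⟨a, b⟩ ⟨c, d⟩ h
  simp only [diagOdd, Prod.mk.injEq] at h
  exact Prod.ext (by omega) (by omega)

lemma isCompl_range_diagEven_range_diagOdd :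
    IsCompl (Set.range diagEven) (Set.range diagOdd) := by
  constructor
  · rw [Set.disjoint_left]
    rintro _ ⟨⟨m, n⟩, rfl⟩ ⟨⟨m', n'⟩, h⟩
    simp only [diagEven, diagOdd, Prod.mk.injEq] at h
    omega
  · rw [codisjoint_iff]
    refine Set.eq_univ_of_forall fun ⟨r, s⟩ => ?_
    rcases Int.emod_two_eq_zero_or_one (r + s) with h | h
    · exact Or.inl ⟨((r + s) / 2, (r - s) / 2), by simp only [diagEven, Prod.mk.injEq]; omega⟩
    · exact Or.inr ⟨((r + s - 1) / 2, (r - s - 1) / 2), by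
        simp only [diagOdd, Prod.mk.injEq]; omega⟩

lemma tsum_eq_tsum_diagEven_add_tsum_diagOdd {E : Type*} [NormedAddCommGroup E]
    [CompleteSpace E] {G : ℤ × ℤ → E} (hG : Summable G) :
    ∑' p, G p = ∑' q, G (diagEven q) + ∑' q, G (diagOdd q) :=
  (HasSum.add_isCompl isCompl_range_diagEven_range_diagOdd
    (diagEven_injective.hasSum_range_iff.mpr (hG.comp_injective diagEven_injective).hasSum)
    (diagOdd_injective.hasSum_range_iff.mpr (hG.comp_injective diagOdd_injective).hasSum)).tsum_eq

lemma thetaTerm_half_mul_diagEven (b b' : ℝ) (x y τ : ℂ) (q : ℤ × ℤ) :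
    thetaTerm 0 b ((x + y) / 2) (τ / 2) (diagEven q).1
        * thetaTerm 0 b' ((x - y) / 2) (τ / 2) (diagEven q).2
      = thetaTerm 0 (b + b') x τ q.1 * thetaTerm 0 (b - b') y τ q.2 := by
  simp only [thetaTerm, diagEven, ← Complex.exp_add]
  congr 1
  push_cast
  ring

lemma thetaTerm_half_mul_diagOdd (b b' : ℝ) (x y τ : ℂ) (q : ℤ × ℤ) :
    thetaTerm 0 b ((x + y) / 2) (τ / 2) (diagOdd q).1
        * thetaTerm 0 b' ((x - y) / 2) (τ / 2) (diagOdd q).2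
      = thetaTerm 1 (b + b') x τ q.1 * thetaTerm 1 (b - b') y τ q.2 := by
  simp only [thetaTerm, diagOdd, ← Complex.exp_add]
  congr 1
  push_cast
  ring

lemma theta_half_mul_theta_half {τ : ℂ} (hτ : 0 < τ.im) (b b' : ℝ) (x y : ℂ) :
    theta 0 b ((x + y) / 2) (τ / 2) * theta 0 b' ((x - y) / 2) (τ / 2)
      = theta 0 (b + b') x τ * theta 0 (b - b') y τ
        + theta 1 (b + b') x τ * theta 1 (b - b') y τ := by
  have hτ2 : 0 < (τ / 2).im := by simpa using hτ
  have hG := summable_mul_of_summable_norm (summable_norm_thetaTerm hτ2 0 b ((x + y) / 2))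
    (summable_norm_thetaTerm hτ2 0 b' ((x - y) / 2))
  rw [theta_mul_theta hτ2, tsum_eq_tsum_diagEven_add_tsum_diagOdd hG,
    theta_mul_theta hτ, theta_mul_theta hτ]
  congr 1
  · exact tsum_congr (thetaTerm_half_mul_diagEven b b' x y τ)
  · exact tsum_congr (thetaTerm_half_mul_diagOdd b b' x y τ)

lemma theta_one_zero_mul_sub_theta_zero_zero_mul {τ : ℂ} (hτ : 0 < τ.im) (x y : ℂ) :
    theta 1 0 x τ * theta 1 0 y τ - theta 0 0 x τ * theta 0 0 y τ
      = -(theta 0 1 ((x + y) / 2) (τ / 2) * theta 0 1 ((x - y) / 2) (τ / 2)) := by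
  rw [theta_half_mul_theta_half hτ]
  norm_num [theta_zero_two, theta_one_two]
  ring

lemma theta_one_one_mul_sub_theta_zero_one_mul {τ : ℂ} (hτ : 0 < τ.im) (x y : ℂ) :
    theta 1 1 x τ * theta 1 1 y τ - theta 0 1 x τ * theta 0 1 y τ
      = -(theta 0 0 ((x + y) / 2) (τ / 2) * theta 0 1 ((x - y) / 2) (τ / 2)) := by
  rw [theta_half_mul_theta_half hτ]
  norm_num [theta_zero_neg_one, theta_one_neg_one]
  ring

lemma two_mul_theta_one_one_mul {τ : ℂ} (hτ : 0 < τ.im) (x y : ℂ) :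
    2 * (theta 1 1 x τ * theta 1 1 y τ)
      = theta 0 1 ((x + y) / 2) (τ / 2) * theta 0 0 ((x - y) / 2) (τ / 2)
        - theta 0 0 ((x + y) / 2) (τ / 2) * theta 0 1 ((x - y) / 2) (τ / 2) := by
  rw [theta_half_mul_theta_half hτ, theta_half_mul_theta_half hτ]
  norm_num [theta_zero_neg_one, theta_one_neg_one]
  ring

section DifferenceOperator

variable (η τ l : ℂ)

lemma rhoS_apply (s f : ℂ → ℂ) (z : ℂ) :
    rhoS η τ l s f z
      = (s (z - l*η) * f (z + η) - s (-z - l*η) * f (z - η)) / theta 1 1 (2*z) τ := rfl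

lemma smul_rhoS (c : ℂ) (s : ℂ → ℂ) : c • rhoS η τ l s = rhoS η τ l (c • s) := by
  ext f z
  simp only [LinearMap.smul_apply, Pi.smul_apply, rhoS_apply, smul_eq_mul]
  ring

lemma rhoS_add (s t : ℂ → ℂ) : rhoS η τ l s + rhoS η τ l t = rhoS η τ l (s + t) := by
  ext f z
  simp only [LinearMap.add_apply, Pi.add_apply, rhoS_apply]
  ring

lemma rhoS_sub (s t : ℂ → ℂ) : rhoS η τ l s - rhoS η τ l t = rhoS η τ l (s - t) := by
  ext f z
  simp only [LinearMap.sub_apply, Pi.sub_apply, rhoS_apply]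
  ring

end DifferenceOperator

def deltaCoeff (η τ u p : ℂ) : ℂ → ℂ :=
  p • (W1 η τ u • s1f η τ + (Complex.I * W2 η τ u) • s2f η τ)
    + W0 η τ u • s0f η τ - W3 η τ u • s3f η τ

lemma delta_eq_rhoS_deltaCoeff (η τ l u p : ℂ) :
    p • (W1 η τ u • rhoS η τ l (s1f η τ) + (Complex.I * W2 η τ u) • rhoS η τ l (s2f η τ))
        + W0 η τ u • rhoS η τ l (s0f η τ) - W3 η τ u • rhoS η τ l (s3f η τ)
      = rhoS η τ l (deltaCoeff η τ u p) := by
  simp only [deltaCoeff, smul_rhoS, rhoS_add, rhoS_sub]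

lemma deltaCoeff_eq {τ : ℂ} (hτ : 0 < τ.im) {η lam : ℂ}
    (hlam : theta 0 1 (lam/2) (τ/2) ≠ 0)
    (h11 : theta 1 1 η τ ≠ 0) (h10 : theta 1 0 η τ ≠ 0)
    (h00 : theta 0 0 η τ ≠ 0) (h01 : theta 0 1 η τ ≠ 0) (u w : ℂ) :
    deltaCoeff η τ u (-theta 0 0 (lam/2) (τ/2) / theta 0 1 (lam/2) (τ/2)) w
      = 2 / theta 0 1 (lam/2) (τ/2) * theta 0 1 (u/2 - w) (τ/2)
          * theta 1 1 (w + (u + lam)/2) τ * theta 1 1 (w + (u - lam)/2) τ := by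
  have hI := theta_one_zero_mul_sub_theta_zero_zero_mul hτ u (2*w)
  have hII := theta_one_one_mul_sub_theta_zero_one_mul hτ u (2*w)
  have hIII := two_mul_theta_one_one_mul hτ (w + (u + lam)/2) (w + (u - lam)/2)
  rw [show (u + 2*w)/2 = u/2 + w by ring, show (u - 2*w)/2 = u/2 - w by ring] at hI hII
  rw [show (w + (u + lam)/2 + (w + (u - lam)/2))/2 = u/2 + w by ring,
    show (w + (u + lam)/2 - (w + (u - lam)/2))/2 = lam/2 by ring] at hIII
  have e0 : W0 η τ u * s0f η τ w = theta 1 1 u τ * theta 1 1 (2*w) τ := by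
    rw [W0, s0f]; field_simp
  have e1 : W1 η τ u * s1f η τ w = theta 1 0 u τ * theta 1 0 (2*w) τ := by
    rw [W1, s1f]; field_simp
  have e2 : Complex.I * W2 η τ u * s2f η τ w = -(theta 0 0 u τ * theta 0 0 (2*w) τ) := by
    rw [W2, s2f]; field_simp; rw [Complex.I_sq]; ring
  have e3 : W3 η τ u * s3f η τ w = theta 0 1 u τ * theta 0 1 (2*w) τ := by
    rw [W3, s3f]; field_simp
  simp only [deltaCoeff, Pi.add_apply, Pi.sub_apply, Pi.smul_apply, smul_eq_mul]
  rw [e0, e1, e2, e3]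
  linear_combination (-theta 0 0 (lam/2) (τ/2) / theta 0 1 (lam/2) (τ/2)) * hI + hII
    - theta 0 1 (u/2 - w) (τ/2) / theta 0 1 (lam/2) (τ/2) * hIII
    + theta 0 0 (u/2 + w) (τ/2) * theta 0 1 (u/2 - w) (τ/2) * mul_inv_cancel₀ hlam

lemma deltaCoeff_eq_of_sign {τ : ℂ} (hτ : 0 < τ.im) {η ε lam : ℂ} (hε : ε = 1 ∨ ε = -1)
    (hlam : theta 0 1 (lam/2) (τ/2) ≠ 0)
    (h11 : theta 1 1 η τ ≠ 0) (h10 : theta 1 0 η τ ≠ 0)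
    (h00 : theta 0 0 η τ ≠ 0) (h01 : theta 0 1 η τ ≠ 0) (u w : ℂ) :
    deltaCoeff η τ u (-theta 0 0 (lam/2) (τ/2) / theta 0 1 (lam/2) (τ/2)) w
      = 2 / theta 0 1 (lam/2) (τ/2) * theta 0 1 (u/2 - w) (τ/2)
          * theta 1 1 (w + (ε*lam + u)/2) τ * theta 1 1 (w + (u - ε*lam)/2) τ := by
  rw [deltaCoeff_eq hτ hlam h11 h10 h00 h01]
  rcases hε with rfl | rfl <;> ring_nf

def thetaProd (η τ : ℂ) (k : ℕ) (x : ℂ) : ℂ :=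
  ∏ j ∈ Finset.range k, theta 1 1 (x + 2*(j:ℂ)*η) τ

lemma brK_eq_thetaProd_mul (η τ z a : ℂ) (k : ℕ) :
    brK η τ z a k = thetaProd η τ k (z + a) * thetaProd η τ k (-z + a) :=
  Finset.prod_mul_distrib

lemma thetaProd_add_two_mul_mul (η τ : ℂ) (k : ℕ) (x : ℂ) :
    thetaProd η τ k (x + 2*η) * theta 1 1 x τ
      = thetaProd η τ k x * theta 1 1 (x + 2*k*η) τ := by
  rw [thetaProd, thetaProd, ← Finset.prod_range_succ, Finset.prod_range_succ']
  push_cast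
  congr 1
  · exact Finset.prod_congr rfl fun j _ => by ring_nf
  · simp

lemma theta_three_product_sub {τ : ℂ} (hτ : 0 < τ.im) (ν u c z : ℂ) :
    theta 0 1 (u/2 - z + c) (τ/2) * theta 1 1 (z - c + (u - ν)/2) τ
        * theta 1 1 (z + ((ν + u)/2 - c) + 4*c) τ
      - theta 0 1 (u/2 + z + c) (τ/2) * theta 1 1 (-z - c + (u - ν)/2) τ
        * theta 1 1 (-z + ((ν + u)/2 - c) + 4*c) τ
      = theta 0 1 (ν/2 + 2*c) (τ/2) * theta 1 1 (u + 2*c) τ * theta 1 1 (2*z) τ := by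
  have hplus := two_mul_theta_one_one_mul hτ (z + ((ν + u)/2 - c) + 4*c) (z - c + (u - ν)/2)
  have hminus := two_mul_theta_one_one_mul hτ (-z + ((ν + u)/2 - c) + 4*c) (-z - c + (u - ν)/2)
  have hzero := two_mul_theta_one_one_mul hτ (u + 2*c) (2*z)
  rw [show (z + ((ν + u)/2 - c) + 4*c + (z - c + (u - ν)/2))/2 = u/2 + z + c by ring,
    show (z + ((ν + u)/2 - c) + 4*c - (z - c + (u - ν)/2))/2 = ν/2 + 2*c by ring] at hplus
  rw [show (-z + ((ν + u)/2 - c) + 4*c + (-z - c + (u - ν)/2))/2 = u/2 - z + c by ring,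
    show (-z + ((ν + u)/2 - c) + 4*c - (-z - c + (u - ν)/2))/2 = ν/2 + 2*c by ring] at hminus
  rw [show (u + 2*c + 2*z)/2 = u/2 + z + c by ring,
    show (u + 2*c - 2*z)/2 = u/2 - z + c by ring] at hzero
  linear_combination (theta 0 1 (u/2 - z + c) (τ/2) * hplus
    - theta 0 1 (u/2 + z + c) (τ/2) * hminus - theta 0 1 (ν/2 + 2*c) (τ/2) * hzero) / 2

lemma fEps_eq_thetaProd_mul (η τ l : ℂ) (tl : ℕ) (ε lam t w : ℂ) :
    fEps η τ l tl ε lam t w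
      = thetaProd η τ tl (w + ((ε*lam + t)/2 - l*η) + η)
          * thetaProd η τ tl (-w + ((ε*lam + t)/2 - l*η) + η) := by
  rw [fEps, brK_eq_thetaProd_mul]
  ring_nf

lemma rhoS_deltaCoeff_fEps {τ : ℂ} (hτ : 0 < τ.im) {η l : ℂ} {tl : ℕ} (hl : (tl:ℂ) = 2*l)
    {ε : ℂ} (hε : ε = 1 ∨ ε = -1) {lam : ℂ} (hlam : theta 0 1 (lam/2) (τ/2) ≠ 0)
    (h11 : theta 1 1 η τ ≠ 0) (h10 : theta 1 0 η τ ≠ 0)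
    (h00 : theta 0 0 η τ ≠ 0) (h01 : theta 0 1 η τ ≠ 0) (u z : ℂ)
    (hz : theta 1 1 (2*z) τ ≠ 0) :
    rhoS η τ l (deltaCoeff η τ u (-theta 0 0 (lam/2) (τ/2) / theta 0 1 (lam/2) (τ/2)))
        (fun w => fEps η τ l tl ε lam u w) z
      = theta 0 1 (ε*lam/2 + 2*(l*η)) (τ/2) / theta 0 1 (lam/2) (τ/2)
          * (2 * theta 1 1 (u + 2*(l*η)) τ) * fEps η τ l tl ε lam (u - 2*η) z := by
  have hcoeff := deltaCoeff_eq_of_sign hτ hε hlam h11 h10 h00 h01 u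
  have hplus : deltaCoeff η τ u (-theta 0 0 (lam/2) (τ/2) / theta 0 1 (lam/2) (τ/2)) (z - l*η)
      = 2 / theta 0 1 (lam/2) (τ/2) * theta 0 1 (u/2 - z + l*η) (τ/2)
          * theta 1 1 (z + ((ε*lam + u)/2 - l*η)) τ * theta 1 1 (z - l*η + (u - ε*lam)/2) τ := by
    rw [hcoeff]; ring_nf
  have hminus : deltaCoeff η τ u (-theta 0 0 (lam/2) (τ/2) / theta 0 1 (lam/2) (τ/2)) (-z - l*η)
      = 2 / theta 0 1 (lam/2) (τ/2) * theta 0 1 (u/2 + z + l*η) (τ/2)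
          * theta 1 1 (-z + ((ε*lam + u)/2 - l*η)) τ
          * theta 1 1 (-z - l*η + (u - ε*lam)/2) τ := by
    rw [hcoeff]; ring_nf
  have hfp : fEps η τ l tl ε lam u (z + η)
      = thetaProd η τ tl (z + ((ε*lam + u)/2 - l*η) + 2*η)
          * thetaProd η τ tl (-z + ((ε*lam + u)/2 - l*η)) := by
    rw [fEps_eq_thetaProd_mul]; ring_nf
  have hfm : fEps η τ l tl ε lam u (z - η)
      = thetaProd η τ tl (z + ((ε*lam + u)/2 - l*η))
          * thetaProd η τ tl (-z + ((ε*lam + u)/2 - l*η) + 2*η) := by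
    rw [fEps_eq_thetaProd_mul]; ring_nf
  have hfz : fEps η τ l tl ε lam (u - 2*η) z
      = thetaProd η τ tl (z + ((ε*lam + u)/2 - l*η))
          * thetaProd η τ tl (-z + ((ε*lam + u)/2 - l*η)) := by
    rw [fEps_eq_thetaProd_mul]; ring_nf
  have htele (x : ℂ) : thetaProd η τ tl (x + 2*η) * theta 1 1 x τ
      = thetaProd η τ tl x * theta 1 1 (x + 4*(l*η)) τ := by
    rw [thetaProd_add_two_mul_mul, hl]; ring_nf
  rw [rhoS_apply, hplus, hminus, hfp, hfm, hfz, div_eq_iff hz]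
  linear_combination 2 / theta 0 1 (lam/2) (τ/2) * thetaProd η τ tl (z + ((ε*lam + u)/2 - l*η))
      * thetaProd η τ tl (-z + ((ε*lam + u)/2 - l*η)) * theta_three_product_sub hτ (ε*lam) u (l*η) z
    + 2 / theta 0 1 (lam/2) (τ/2) * theta 0 1 (u/2 - z + l*η) (τ/2)
      * theta 1 1 (z - l*η + (u - ε*lam)/2) τ * thetaProd η τ tl (-z + ((ε*lam + u)/2 - l*η))
      * htele (z + ((ε*lam + u)/2 - l*η))
    - 2 / theta 0 1 (lam/2) (τ/2) * theta 0 1 (u/2 + z + l*η) (τ/2)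
      * theta 1 1 (-z - l*η + (u - ε*lam)/2) τ * thetaProd η τ tl (z + ((ε*lam + u)/2 - l*η))
      * htele (-z + ((ε*lam + u)/2 - l*η))

theorem stmt2_general (τ η l : ℂ) (hτ : 0 < τ.im) (tl : ℕ) (hl : (tl:ℂ) = 2*l)
    (ε : ℂ) (hε : ε = 1 ∨ ε = -1) (lam u : ℂ)
    (h2 : theta 0 1 (lam/2) (τ/2) ≠ 0)
    (h11 : theta 1 1 η τ ≠ 0) (h10 : theta 1 0 η τ ≠ 0)
    (h00 : theta 0 0 η τ ≠ 0) (h01 : theta 0 1 η τ ≠ 0)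
    (p : ℂ)
    (hp : p = -theta 0 0 (lam/2) (τ/2) / theta 0 1 (lam/2) (τ/2)) :
    ∀ z : ℂ, theta 1 1 (2*z) τ ≠ 0 →
      (p • (W1 η τ u • rhoS η τ l (s1f η τ)
              + (Complex.I * W2 η τ u) • rhoS η τ l (s2f η τ))
        + W0 η τ u • rhoS η τ l (s0f η τ) - W3 η τ u • rhoS η τ l (s3f η τ))
        (fun w => fEps η τ l tl ε lam u w) z
      = (theta 0 1 ((lam + 4*ε*l*η)/2) (τ/2) / theta 0 1 (lam/2) (τ/2)) *
          (2 * theta 1 1 (u + 2*l*η) τ) * fEps η τ l tl ε lam (u - 2*η) z := by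
  intro z hz
  have hshift : theta 0 1 (ε*lam/2 + 2*(l*η)) (τ/2) = theta 0 1 ((lam + 4*ε*l*η)/2) (τ/2) := by
    rcases hε with rfl | rfl
    · ring_nf
    · rw [← theta_zero_one_neg]; ring_nf
  rw [hp, delta_eq_rhoS_deltaCoeff, rhoS_deltaCoeff_fEps hτ hl hε h2 h11 h10 h00 h01 u z hz,
    hshift, ← mul_assoc 2 l η]

/-- The operator δ acts on `f_ε(λ,u,·)` with eigenfactor and shift `u ↦ u-2η`. -/
theorem stmt2 (τ η l : ℂ) (hτ : 0 < τ.im) (tl : ℕ) (htl : 0 < tl) (hl : (tl:ℂ) = 2*l)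
    (ε : ℂ) (hε : ε = 1 ∨ ε = -1) (lam u : ℂ)
    (h1 : theta 0 1 ((lam + 4*ε*l*η)/2) (τ/2) ≠ 0)
    (h2 : theta 0 1 (lam/2) (τ/2) ≠ 0)
    (h11 : theta 1 1 η τ ≠ 0) (h10 : theta 1 0 η τ ≠ 0)
    (h00 : theta 0 0 η τ ≠ 0) (h01 : theta 0 1 η τ ≠ 0)
    (p : ℂ)
    (hp : p = -theta 0 0 (lam/2) (τ/2) / theta 0 1 (lam/2) (τ/2)) :
    ∀ z : ℂ, theta 1 1 (2*z) τ ≠ 0 →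
      (p • (W1 η τ u • rhoS η τ l (s1f η τ)
              + (Complex.I * W2 η τ u) • rhoS η τ l (s2f η τ))
        + W0 η τ u • rhoS η τ l (s0f η τ) - W3 η τ u • rhoS η τ l (s3f η τ))
        (fun w => fEps η τ l tl ε lam u w) z
      = (theta 0 1 ((lam + 4*ε*l*η)/2) (τ/2) / theta 0 1 (lam/2) (τ/2)) *
          (2 * theta 1 1 (u + 2*l*η) τ) * fEps η τ l tl ε lam (u - 2*η) z :=
  stmt2_general τ η l hτ tl hl ε hε lam u h2 h11 h10 h00 h01 p hp
end
end

section
/- Let u, v ∈ ℂ and suppose θ^{(2l)}_{00}((v−u)/2 + 2mlη) ≠ 0 for all m ∈ ℤ. If t : ℤ → ℂ satisfies the recurrence t_{m+2}·θ^{(2l)}_{00}((v−u)/2 + 2mlη) = t_m·θ^{(2l)}_{00}((u−v)/2 + 2mlη) for all m ∈ ℤ, then t_{m+1} = t_{−m+1} for all m ∈ ℤ. -/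
noncomputable section

open Complex

lemma theta00_even (z τ : ℂ) : theta 0 0 (-z) τ = theta 0 0 z τ := by
  unfold theta
  rw [← (Equiv.neg ℤ).tsum_eq (fun n : ℤ =>
    Complex.exp ((Real.pi : ℂ) * Complex.I * (((0:ℝ):ℂ)/2 + (n : ℂ))^2 * τ +
      2 * (Real.pi : ℂ) * Complex.I * (((0:ℝ):ℂ)/2 + (n : ℂ)) * (((0:ℝ):ℂ)/2 + z)))]
  apply tsum_congr
  intro n
  simp only [Equiv.neg_apply, Int.cast_neg]
  congr 1
  push_cast
  ring

lemma theta2l_even (η τ : ℂ) (tl : ℕ) (u : ℂ) :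
    theta2l η τ tl (-u) = theta2l η τ tl u := by
  unfold theta2l
  conv_lhs => rw [← Finset.prod_range_reflect]
  apply Finset.prod_congr rfl
  intro j hj
  rw [Finset.mem_range] at hj
  have h1 : (((tl - 1 - j : ℕ) : ℂ)) = (tl:ℂ) - 1 - (j:ℂ) := by
    have h2 : 1 ≤ tl := by omega
    push_cast [Nat.cast_sub (by omega : j ≤ tl - 1), Nat.cast_sub h2]
    ring
  have h3 : -u + (2*(((tl - 1 - j : ℕ)):ℂ) - (tl:ℂ) + 1)*η
      = -(u + (2*(j:ℂ) - (tl:ℂ) + 1)*η) := by rw [h1]; ring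
  rw [h3, theta00_even]

/-- The recurrence for `t_m` implies `t_{m+1} = t_{-m+1}`. -/
theorem stmt8 (τ η l : ℂ) (hτ : 0 < τ.im) (tl : ℕ) (htl : 0 < tl) (hl : (tl:ℂ) = 2*l)
    (u v : ℂ)
    (hG : ∀ m : ℤ, theta2l η τ tl ((v-u)/2 + 2*(m:ℂ)*l*η) ≠ 0)
    (t : ℤ → ℂ)
    (ht : ∀ m : ℤ, t (m+2) * theta2l η τ tl ((v-u)/2 + 2*(m:ℂ)*l*η)
        = t m * theta2l η τ tl ((u-v)/2 + 2*(m:ℂ)*l*η)) :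
    ∀ m : ℤ, t (m+1) = t (-m+1) := by
  set G : ℤ → ℂ := fun m => theta2l η τ tl ((v-u)/2 + 2*(m:ℂ)*l*η) with hGdef
  have hsym : ∀ m : ℤ, theta2l η τ tl ((u-v)/2 + 2*(m:ℂ)*l*η) = G (-m) := by
    intro m
    have : (u-v)/2 + 2*(m:ℂ)*l*η = -((v-u)/2 + 2*((-m : ℤ):ℂ)*l*η) := by
      push_cast; ring
    rw [this, theta2l_even, hGdef]
  have ht' : ∀ m : ℤ, t (m+2) * G m = t m * G (-m) := by
    intro m; rw [← hsym m]; exact ht m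
  have hG' : ∀ m : ℤ, G m ≠ 0 := hG
  have key : ∀ n : ℕ, t ((n:ℤ)+1) = t (-(n:ℤ)+1) := by
    intro n
    induction n using Nat.twoStepInduction with
    | zero => norm_num
    | one =>
        have e := ht' 0
        have h0 := hG' 0
        have : t 2 = t 0 := by
          have := mul_right_cancel₀ h0 (by simpa using e)
          simpa using this
        norm_num
        convert this using 2 <;> norm_num
    | more n IH _ =>
        have hcast : ((n+2:ℕ):ℤ) = (n:ℤ)+2 := by push_cast; ring
        rw [hcast]
        have e1 := ht' ((n:ℤ)+1)
        have e2 := ht' (-(n:ℤ)-1)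
        have hA : (n:ℤ)+1+2 = (n:ℤ)+2+1 := by ring
        have hB : -(n:ℤ)-1+2 = -(n:ℤ)+1 := by ring
        have hC : -(-(n:ℤ)-1) = (n:ℤ)+1 := by ring
        rw [hA] at e1
        rw [hB, hC] at e2
        rw [IH] at e1
        have hgoal : -((n:ℤ)+2)+1 = -(n:ℤ)-1 := by ring
        rw [hgoal]
        apply mul_right_cancel₀ (hG' ((n:ℤ)+1))
        rw [e1, ← e2]
        have hD : -((n:ℤ)+1) = -(n:ℤ)-1 := by ring
        rw [hD]
  intro m
  obtain ⟨n, rfl | rfl⟩ := Int.eq_nat_or_neg m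
  · exact key n
  · have := (key n).symm
    rw [neg_neg]
    exact this
end
end
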